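/- For any fixed field K and any connected simple graph G, the connected subgraph arrangement A_G(K) is combinatorially formal: A_G(K) is formal, and every arrangement whose intersection lattice is isomorphic to that of A_G(K) is also formal. -/

import Mathlib

open Submodule

/-! ## Basic definitions for hyperplane arrangements -/

/-- The linear form `∑_{i ∈ I} x_i` on `K^n`. -/
noncomputable def sumForm (n : ℕ) (K : Type*) [Field K] (I : Finset (Fin n)) :
    (Fin n → K) →ₗ[K] K :=
  ∑ i ∈ I, LinearMap.proj i

/-- The hyperplane `H_I = ker (∑_{i ∈ I} x_i)` in `K^n`. -/
noncomputable def hypI (n : ℕ) (K : Type*) [Field K] (I : Finset (Fin n)) :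
    Submodule K (Fin n → K) :=
  LinearMap.ker (sumForm n K I)

/-- The nonempty vertex subsets of `G` inducing connected subgraphs. -/
def connSets {n : ℕ} (G : SimpleGraph (Fin n)) : Set (Finset (Fin n)) :=
  {I | I.Nonempty ∧ (G.induce (I : Set (Fin n))).Connected}

/-- The connected subgraph arrangement `A_G(K)` in `K^n`. -/
noncomputable def connArr (K : Type*) [Field K] {n : ℕ} (G : SimpleGraph (Fin n)) :
    Set (Submodule K (Fin n → K)) :=
  (hypI n K) '' (connSets G)

/-- The intersection lattice of a central arrangement: all intersections of
subfamilies of `A` (with the empty intersection being the ambient space `⊤`). -/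
def lat {K V : Type*} [Field K] [AddCommGroup V] [Module K V]
    (A : Set (Submodule K V)) : Set (Submodule K V) :=
  {X | ∃ B ⊆ A, X = sInf B}

/-- A central arrangement: a finite set of hyperplanes (coatoms of the submodule
lattice) in `V`. -/
def IsCentralArr {K V : Type*} [Field K] [AddCommGroup V] [Module K V]
    (A : Set (Submodule K V)) : Prop :=
  A.Finite ∧ ∀ H ∈ A, IsCoatom H

/-- Two arrangements in `V` are linearly isomorphic. -/
def LinIsom {K V : Type*} [Field K] [AddCommGroup V] [Module K V]
    (A B : Set (Submodule K V)) : Prop :=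
  ∃ φ : V ≃ₗ[K] V, B = (Submodule.map (φ : V →ₗ[K] V)) '' A

/-- Two arrangements are `L`-equivalent: their intersection lattices are
isomorphic posets. -/
def LEquiv {K V W : Type*} [Field K] [AddCommGroup V] [Module K V]
    [AddCommGroup W] [Module K W]
    (A : Set (Submodule K V)) (B : Set (Submodule K W)) : Prop :=
  Nonempty (↥(lat A) ≃o ↥(lat B))

/-- An arrangement `A` in `V` is projectively unique if every central arrangement
in `V` that is `L`-equivalent to `A` is linearly isomorphic to `A`. -/
def ProjUnique {K V : Type*} [Field K] [AddCommGroup V] [Module K V]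
    (A : Set (Submodule K V)) : Prop :=
  ∀ B : Set (Submodule K V), IsCentralArr B → LEquiv B A → LinIsom B A

/-- `Gen_i(A,S)`. -/
def Gen {K V : Type*} [Field K] [AddCommGroup V] [Module K V]
    (A S : Set (Submodule K V)) : ℕ → Set (Submodule K V)
  | 0 => S
  | (i+1) => {H | H ∈ A ∧ ∃ J ⊆ lat (Gen A S i), H = sSup J}

/-- The subarrangement `⟨S⟩_A` of `A` generated by `S`. -/
def genSpan {K V : Type*} [Field K] [AddCommGroup V] [Module K V]
    (A S : Set (Submodule K V)) : Set (Submodule K V) :=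
  ⋃ i, Gen A S i

/-- An arrangement is irreducible if it is not (linearly isomorphic to)
a nontrivial product of two lower-dimensional arrangements. -/
def IsIrredArr {K V : Type*} [Field K] [AddCommGroup V] [Module K V]
    (A : Set (Submodule K V)) : Prop :=
  ¬ ∃ U W : Submodule K V, IsCompl U W ∧ U ≠ ⊥ ∧ W ≠ ⊥ ∧ ∀ H ∈ A, U ≤ H ∨ W ≤ H

/-! ## Freeness -/

/-- The linear form `f` as a degree one polynomial. -/
noncomputable def toPoly {n : ℕ} {K : Type*} [Field K] (f : (Fin n → K) →ₗ[K] K) :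
    MvPolynomial (Fin n) K :=
  ∑ i, MvPolynomial.C (f (Pi.single i 1)) * MvPolynomial.X i

/-- The module `D(A)` of logarithmic derivations of an arrangement in `K^n`:
all `θ` with `θ(α_H) ∈ (α_H)` for every defining form `α_H` of every `H ∈ A`. -/
noncomputable def logDer (K : Type*) [Field K] {n : ℕ}
    (A : Set (Submodule K (Fin n → K))) :
    Submodule (MvPolynomial (Fin n) K)
      (Derivation K (MvPolynomial (Fin n) K) (MvPolynomial (Fin n) K)) where
  carrier := {θ | ∀ H ∈ A, ∀ f : (Fin n → K) →ₗ[K] K, LinearMap.ker f = H →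
      θ (toPoly f) ∈ Ideal.span {toPoly f}}
  add_mem' := by
    intro a b ha hb H hH f hf
    simpa using add_mem (ha H hH f hf) (hb H hH f hf)
  zero_mem' := by
    intro H hH f hf
    simp
  smul_mem' := by
    intro c θ hθ H hH f hf
    simpa [smul_eq_mul] using Ideal.mul_mem_left _ c (hθ H hH f hf)

/-- An arrangement in `K^n` is free if its module of logarithmic derivations is
free over the polynomial ring. -/
def IsFreeArr (K : Type*) [Field K] {n : ℕ}
    (A : Set (Submodule K (Fin n → K))) : Prop :=
  Module.Free (MvPolynomial (Fin n) K) ↥(logDer K A)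

/-- Freeness with a prescribed tuple of exponents: there is a basis of `D(A)`
consisting of homogeneous derivations of the given degrees. -/
def IsFreeExp (K : Type*) [Field K] {n : ℕ} (A : Set (Submodule K (Fin n → K)))
    (e : Fin n → ℕ) : Prop :=
  ∃ b : Module.Basis (Fin n) (MvPolynomial (Fin n) K) ↥(logDer K A),
    ∀ i j, ((b i : Derivation K (MvPolynomial (Fin n) K) (MvPolynomial (Fin n) K))
      (MvPolynomial.X j)).IsHomogeneous (e i)

/-- The restriction `A^X` of an arrangement to a flat `X`, as an arrangement in `X`. -/
def restrictArr {K V : Type*} [Field K] [AddCommGroup V] [Module K V]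
    (A : Set (Submodule K V)) (X : Submodule K V) : Set (Submodule K ↥X) :=
  {Y | ∃ H ∈ A, ¬ X ≤ H ∧ Y = Submodule.comap X.subtype H}

/-- Freeness with prescribed exponents for an arrangement in an abstract space:
transport along a linear isomorphism with `K^d`. -/
def IsFreeExpOn {K W : Type*} [Field K] [AddCommGroup W] [Module K W]
    (A : Set (Submodule K W)) (d : ℕ) (e : Fin d → ℕ) : Prop :=
  ∃ φ : W ≃ₗ[K] (Fin d → K),
    IsFreeExp K ((Submodule.map (φ : W →ₗ[K] (Fin d → K))) '' A) e

/-- Accuracy: `A` is free with (sorted) exponents `e₁ ≤ … ≤ e_n` and for each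
`1 ≤ d ≤ n` some flat `X ∈ L(A)` of dimension `d` has free restriction `A^X`
with exponents `(e₁, …, e_d)`. -/
def IsAccurate (K : Type*) [Field K] {n : ℕ}
    (A : Set (Submodule K (Fin n → K))) : Prop :=
  ∃ e : Fin n → ℕ, Monotone e ∧ IsFreeExp K A e ∧
    ∀ d : ℕ, 1 ≤ d → ∀ (hdn : d ≤ n), ∃ X ∈ lat A, Module.finrank K ↥X = d ∧
      IsFreeExpOn (restrictArr A X) d (fun i => e ⟨i.1, lt_of_lt_of_le i.2 hdn⟩)

/-! ## Graphs -/

/-- The path graph on vertices `0, 1, …, n-1` (consecutive vertices adjacent). -/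
def pathGraph' (n : ℕ) : SimpleGraph (Fin n) :=
  SimpleGraph.fromRel (fun a b => a.1 + 1 = b.1)

/-- The almost-path graph `A_{n,k}` (vertices `1, …, n+1` of the paper are
`0, …, n` here): a path on `0, …, n-1` plus the vertex `n` joined to `k-1`. -/
def almostPathGraph (n k : ℕ) : SimpleGraph (Fin (n+1)) :=
  SimpleGraph.fromRel (fun a b => (a.1 + 1 = b.1 ∧ b.1 < n) ∨ (a.1 + 1 = k ∧ b.1 = n))

/-- The path-with-triangle graph `Δ_{n,k}` (vertices `1, …, n+1` of the paper are
`0, …, n` here): a path on `0, …, n-1` plus the vertex `n` joined to `k-1` and `k`. -/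
def pathTriangleGraph (n k : ℕ) : SimpleGraph (Fin (n+1)) :=
  SimpleGraph.fromRel (fun a b =>
    (a.1 + 1 = b.1 ∧ b.1 < n) ∨ ((a.1 + 1 = k ∨ a.1 = k) ∧ b.1 = n))

/-! ## Factored and inductively factored arrangements -/

/-- The localization `A_X`. -/
def locArr {K V : Type*} [Field K] [AddCommGroup V] [Module K V]
    (A : Set (Submodule K V)) (X : Submodule K V) : Set (Submodule K V) :=
  {H | H ∈ A ∧ X ≤ H}

/-- `P` is a partition of the set `A` (into nonempty blocks). -/
def IsPartitionOf {α : Type*} (A : Set α) (P : Set (Set α)) : Prop :=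
  (∀ B ∈ P, B.Nonempty) ∧ (∀ B ∈ P, B ⊆ A) ∧ ∀ a ∈ A, ∃! B, B ∈ P ∧ a ∈ B

/-- A partition of an arrangement is independent if any transversal choice of
hyperplanes, one from each block, is linearly independent (the codimension of the
intersection equals the number of blocks). -/
def IsIndepPartition {K V : Type*} [Field K] [AddCommGroup V] [Module K V]
    (P : Set (Set (Submodule K V))) : Prop :=
  ∀ f : Set (Submodule K V) → Submodule K V, (∀ B ∈ P, f B ∈ B) →
    Module.finrank K V = P.ncard + Module.finrank K ↥(⨅ B ∈ P, f B)

/-- A nice partition (factorization) of an arrangement. -/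
def IsNicePartition {K V : Type*} [Field K] [AddCommGroup V] [Module K V]
    (A : Set (Submodule K V)) (P : Set (Set (Submodule K V))) : Prop :=
  IsPartitionOf A P ∧ IsIndepPartition P ∧
    ∀ X ∈ lat A, X ≠ (⊤ : Submodule K V) →
      ∃ B ∈ P, ∃ H, B ∩ locArr A X = {H}

/-- An arrangement is factored (nice) if it admits a nice partition. -/
def IsFactored {K V : Type*} [Field K] [AddCommGroup V] [Module K V]
    (A : Set (Submodule K V)) : Prop :=
  ∃ P, IsNicePartition A P

/-- Inductively factored arrangements (in coordinate spaces `K^d`, restrictions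
being transported to a coordinate space by a linear isomorphism). -/
inductive IndFactored (K : Type) [Field K] :
    (d : ℕ) → Set (Submodule K (Fin d → K)) → Set (Set (Submodule K (Fin d → K))) → Prop
  | empty (d : ℕ) : IndFactored K d ∅ ∅
  | step (d : ℕ) (A : Set (Submodule K (Fin d → K)))
      (P : Set (Set (Submodule K (Fin d → K))))
      (B₁ : Set (Submodule K (Fin d → K))) (H₀ : Submodule K (Fin d → K))
      (e : ℕ) (φ : ↥H₀ ≃ₗ[K] (Fin e → K))
      (hB₁ : B₁ ∈ P) (hH₀B : H₀ ∈ B₁) (hH₀A : H₀ ∈ A)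
      (hbij : Set.BijOn (fun H => Submodule.comap H₀.subtype H) (A \ B₁)
        ((fun H => Submodule.comap H₀.subtype H) '' (A \ {H₀})))
      (hdel : IndFactored K d (A \ {H₀})
        {C | ∃ B ∈ P, C = B ∩ (A \ {H₀}) ∧ C.Nonempty})
      (hres : IndFactored K e
        ((fun Y => Submodule.map (φ : ↥H₀ →ₗ[K] (Fin e → K)) Y) ''
          ((fun H => Submodule.comap H₀.subtype H) '' (A \ {H₀})))
        {C | ∃ B ∈ P, B ≠ B₁ ∧
          C = (fun Y => Submodule.map (φ : ↥H₀ →ₗ[K] (Fin e → K)) Y) ''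
            ((fun H => Submodule.comap H₀.subtype H) '' B)}) :
      IndFactored K d A P

/-- Inductively free arrangements with their multisets of exponents. -/
inductive IndFree (K : Type) [Field K] :
    (d : ℕ) → Set (Submodule K (Fin d → K)) → Multiset ℕ → Prop
  | empty (d : ℕ) : IndFree K d ∅ (Multiset.replicate d 0)
  | step (d : ℕ) (A : Set (Submodule K (Fin d → K))) (H₀ : Submodule K (Fin d → K))
      (m : ℕ) (φ : ↥H₀ ≃ₗ[K] (Fin m → K)) (E : Multiset ℕ) (e : ℕ)
      (hH₀ : H₀ ∈ A)
      (hdel : IndFree K d (A \ {H₀}) (e ::ₘ E))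
      (hres : IndFree K m
        ((fun Y => Submodule.map (φ : ↥H₀ →ₗ[K] (Fin m → K)) Y) ''
          ((fun H => Submodule.comap H₀.subtype H) '' (A \ {H₀}))) E) :
      IndFree K d A ((e+1) ::ₘ E)

/-! ## Asphericity -/

/-- The complement of (the union of) a complex arrangement in `ℂ^n`. -/
def arrComp {n : ℕ} (A : Set (Submodule ℂ (Fin n → ℂ))) : Set (Fin n → ℂ) :=
  {v | ∀ H ∈ A, v ∉ H}

/-- A space is aspherical if all its homotopy groups `π_m`, `m ≥ 2`, vanish. -/
def IsAspherical (X : Type*) [TopologicalSpace X] : Prop :=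
  ∀ (x : X) (m : ℕ), 2 ≤ m → Subsingleton (HomotopyGroup (Fin m) X x)

/-- A complex arrangement is `K(π,1)` if its complement is aspherical. -/
def IsKPi1 {n : ℕ} (A : Set (Submodule ℂ (Fin n → ℂ))) : Prop :=
  IsAspherical ↥(arrComp A)

/-! ## Formality -/

/-- Formality: all linear dependencies among (any choice of) defining forms of the
hyperplanes are generated by the dependencies supported on rank-two flats. -/
def IsFormal {K V : Type*} [Field K] [AddCommGroup V] [Module K V]
    (A : Set (Submodule K V)) : Prop :=
  ∀ α : Submodule K V → (V →ₗ[K] K),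
    (∀ H ∈ A, LinearMap.ker (α H) = H) →
    ∀ c : Submodule K V →₀ K, ↑c.support ⊆ A →
      (∑ H ∈ c.support, c H • α H) = 0 →
      c ∈ Submodule.span K
        {r : Submodule K V →₀ K | ↑r.support ⊆ A ∧
          (∑ H ∈ r.support, r H • α H) = 0 ∧
          ∃ X ∈ lat A, Module.finrank K (V ⧸ X) = 2 ∧ ∀ H ∈ r.support, X ≤ H}

/-- Combinatorial formality. -/
def IsCombFormal {K V : Type*} [Field K] [AddCommGroup V] [Module K V]
    (A : Set (Submodule K V)) : Prop :=
  IsFormal A ∧ ∀ (K' : Type) [Field K'] (m : ℕ) (B : Set (Submodule K' (Fin m → K'))),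
    IsCentralArr B → Nonempty (↥(lat B) ≃o ↥(lat A)) → IsFormal B

/-! ## Line closure -/

/-- `C` is a line-closed subset of the arrangement `A`. -/
def IsLineClosed {K V : Type*} [Field K] [AddCommGroup V] [Module K V]
    (A C : Set (Submodule K V)) : Prop :=
  ∀ H ∈ C, ∀ H' ∈ C, {H'' | H'' ∈ A ∧ H ⊓ H' ≤ H''} ⊆ C

/-- The line closure of `B` in `A`. -/
def lineClosure {K V : Type*} [Field K] [AddCommGroup V] [Module K V]
    (A B : Set (Submodule K V)) : Set (Submodule K V) :=
  ⋂₀ {C | B ⊆ C ∧ C ⊆ A ∧ IsLineClosed A C}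

/-! ## MAT-freeness -/

/-- MAT-freeness of an arrangement in `K^n`. -/
def IsMATFree (K : Type*) [Field K] {n : ℕ}
    (A : Set (Submodule K (Fin n → K))) : Prop :=
  ∃ (m : ℕ) (π : Fin m → Set (Submodule K (Fin n → K))),
    (⋃ i, π i) = A ∧
    (∀ i, (π i).Nonempty) ∧
    (∀ i j, i ≠ j → Disjoint (π i) (π j)) ∧
    ∀ j : Fin m,
      (n = (π j).ncard + Module.finrank K ↥(sInf (π j) : Submodule K (Fin n → K))) ∧
      (¬ (SetLike.coe (sInf (π j) : Submodule K (Fin n → K)) ⊆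
          ⋃ H ∈ {H | ∃ i : Fin m, i < j ∧ H ∈ π i}, SetLike.coe H)) ∧
      ∀ H ∈ π j,
        {H' | ∃ i : Fin m, i < j ∧ H' ∈ π i}.ncard =
          ((fun H' => H' ⊓ H) '' {H' | ∃ i : Fin m, i < j ∧ H' ∈ π i}).ncard + j.1

/-! ## Subarrangements by size, supersolvability -/

/-- The ideal subarrangement `A_G^s` of hyperplanes `H_I` with `|I| ≤ s`. -/
noncomputable def AGs (K : Type*) [Field K] {n : ℕ} (G : SimpleGraph (Fin n)) (s : ℕ) :
    Set (Submodule K (Fin n → K)) :=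
  hypI n K '' {I | I ∈ connSets G ∧ I.card ≤ s}

/-- The closure of a subspace in the intersection lattice of `A`. -/
noncomputable def flatClosure {K V : Type*} [Field K] [AddCommGroup V] [Module K V]
    (A : Set (Submodule K V)) (Z : Submodule K V) : Submodule K V :=
  sInf {H | H ∈ A ∧ Z ≤ H}

/-- The rank (codimension) of a subspace of `K^n`. -/
noncomputable def arrRank (K : Type*) [Field K] {n : ℕ}
    (X : Submodule K (Fin n → K)) : ℕ :=
  n - Module.finrank K ↥X

/-- A modular flat of an arrangement. -/
noncomputable def IsModularFlat (K : Type*) [Field K] {n : ℕ}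
    (A : Set (Submodule K (Fin n → K))) (X : Submodule K (Fin n → K)) : Prop :=
  X ∈ lat A ∧ ∀ Y ∈ lat A,
    arrRank K X + arrRank K Y =
      arrRank K (X ⊓ Y) + arrRank K (flatClosure A (X ⊔ Y))

/-- Supersolvability: a maximal chain of modular flats in `L(A)`. -/
noncomputable def IsSupersolvable (K : Type*) [Field K] {n : ℕ}
    (A : Set (Submodule K (Fin n → K))) : Prop :=
  ∃ c : ℕ → Submodule K (Fin n → K),
    c 0 = ⊤ ∧ c (arrRank K (sInf A)) = sInf A ∧
    (∀ i ≤ arrRank K (sInf A), IsModularFlat K A (c i) ∧ arrRank K (c i) = i) ∧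
    ∀ i < arrRank K (sInf A), c (i + 1) ≤ c i

/-!
For a connected vertex set `I` with `|I| ≥ 2`, removing a suitable vertex `v` leaves `G[I]`
connected, and `H_I` contains the rank-two flat `H_{I \ v} ∩ H_{v}`. By induction on `|I|`, every
hyperplane of `A_G` is therefore reached from the coordinate hyperplanes `H_{i}` by steps inside
rank-two flats, a property of the intersection lattice alone. In an arrangement with the same
lattice each step expresses the form of the new hyperplane through two earlier ones by a rank-two
relation, so modulo rank-two relations every dependency lives on the `n` forms matching the
coordinate hyperplanes. These are independent: their common kernel corresponds to the flat `⊥` of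
codimension `n`, and codimension is determined by the lattice.
-/

open Module

section Codimension

variable {K V : Type*} [Field K] [AddCommGroup V] [Module K V]

lemma Submodule.isCoatom_iff_finrank_quotient_eq_one {H : Submodule K V} :
    IsCoatom H ↔ finrank K (V ⧸ H) = 1 :=
  isSimpleModule_iff_isCoatom.symm.trans isSimpleModule_iff_finrank_eq_one

variable [FiniteDimensional K V]

lemma Submodule.finrank_quotient_lt_of_lt {X Y : Submodule K V} (h : X < Y) :
    finrank K (V ⧸ Y) < finrank K (V ⧸ X) := by
  have := Submodule.finrank_lt_finrank_of_lt h
  have := X.finrank_quotient_add_finrank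
  have := Y.finrank_quotient_add_finrank
  omega

lemma Submodule.eq_of_le_of_finrank_quotient_eq {X Y : Submodule K V} (h : X ≤ Y)
    (hXY : finrank K (V ⧸ X) = finrank K (V ⧸ Y)) : X = Y :=
  h.eq_of_not_lt fun hlt => (finrank_quotient_lt_of_lt hlt).ne' hXY

lemma Submodule.finrank_quotient_inf_le (X Y : Submodule K V) :
    finrank K (V ⧸ X ⊓ Y) ≤ finrank K (V ⧸ X) + finrank K (V ⧸ Y) := by
  have hker : LinearMap.ker (X.mkQ.prod Y.mkQ) = X ⊓ Y := by
    rw [LinearMap.ker_prod, Submodule.ker_mkQ, Submodule.ker_mkQ]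
  calc finrank K (V ⧸ X ⊓ Y) = finrank K (LinearMap.range (X.mkQ.prod Y.mkQ)) := by
        rw [← hker]; exact (LinearMap.quotKerEquivRange _).finrank_eq
    _ ≤ finrank K ((V ⧸ X) × (V ⧸ Y)) := Submodule.finrank_le _
    _ = _ := Module.finrank_prod

lemma Submodule.finrank_quotient_inf_eq_two {H₁ H₂ : Submodule K V} (h₁ : IsCoatom H₁)
    (h₂ : IsCoatom H₂) (hne : H₁ ≠ H₂) : finrank K (V ⧸ H₁ ⊓ H₂) = 2 := by
  have hlt : H₁ ⊓ H₂ < H₁ := inf_lt_left.2 fun hle => hne ((h₁.le_iff_eq h₂.1).1 hle).symm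
  have := finrank_quotient_lt_of_lt hlt
  have := finrank_quotient_inf_le H₁ H₂
  rw [isCoatom_iff_finrank_quotient_eq_one] at h₁ h₂
  omega

end Codimension

section IntersectionLattice

variable {K V : Type*} [Field K] [AddCommGroup V] [Module K V]

lemma subset_lat (A : Set (Submodule K V)) : A ⊆ lat A :=
  fun H hH => ⟨{H}, Set.singleton_subset_iff.2 hH, sInf_singleton.symm⟩

lemma inf_mem_lat {A : Set (Submodule K V)} {X Y : Submodule K V} (hX : X ∈ lat A)
    (hY : Y ∈ lat A) : X ⊓ Y ∈ lat A := by
  obtain ⟨s, hs, rfl⟩ := hX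
  obtain ⟨t, ht, rfl⟩ := hY
  exact ⟨s ∪ t, Set.union_subset hs ht, sInf_union.symm⟩

variable [FiniteDimensional K V] {A : Set (Submodule K V)}

lemma IsCentralArr.mem_iff_finrank_quotient_eq_one (hA : IsCentralArr A) {X : Submodule K V}
    (hX : X ∈ lat A) : X ∈ A ↔ finrank K (V ⧸ X) = 1 := by
  refine ⟨fun h => Submodule.isCoatom_iff_finrank_quotient_eq_one.1 (hA.2 X h), fun h => ?_⟩
  obtain ⟨s, hsA, rfl⟩ := hX
  obtain ⟨H, hH⟩ : s.Nonempty := Set.nonempty_iff_ne_empty.2 fun hs => by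
    rw [hs, sInf_empty, finrank_zero_of_subsingleton] at h
    exact zero_ne_one h
  have hHA := hsA hH
  rwa [Submodule.eq_of_le_of_finrank_quotient_eq (sInf_le hH)
    (h.trans (Submodule.isCoatom_iff_finrank_quotient_eq_one.1 (hA.2 H hHA)).symm)]

lemma IsCentralArr.exists_ge_finrank_quotient_eq (hA : IsCentralArr A) {X : Submodule K V}
    (hX : X ∈ lat A) {k : ℕ} (hk : k ≤ finrank K (V ⧸ X)) :
    ∃ Y ∈ lat A, X ≤ Y ∧ finrank K (V ⧸ Y) = k := by
  obtain ⟨s, hsA, rfl⟩ := hX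
  induction s, hA.1.subset hsA using Set.Finite.induction_on generalizing k with
  | empty =>
    refine ⟨sInf ∅, ⟨∅, Set.empty_subset _, rfl⟩, le_rfl, ?_⟩
    have h0 : finrank K (V ⧸ sInf (∅ : Set (Submodule K V))) = 0 := by
      rw [sInf_empty]; exact finrank_zero_of_subsingleton
    omega
  | @insert H s _ _ ih =>
    rw [sInf_insert] at hk ⊢
    by_cases hks : k ≤ finrank K (V ⧸ sInf s)
    · obtain ⟨Y, hY, hsY, hYk⟩ := ih (fun _ h => hsA (Set.mem_insert_of_mem H h)) hks
      exact ⟨Y, hY, inf_le_right.trans hsY, hYk⟩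
    · refine ⟨H ⊓ sInf s, ⟨insert H s, hsA, sInf_insert.symm⟩, le_rfl, ?_⟩
      have := Submodule.finrank_quotient_inf_le H (sInf s)
      rw [(hA.mem_iff_finrank_quotient_eq_one (subset_lat A (hsA (Set.mem_insert H s)))).1
        (hsA (Set.mem_insert H s))] at this
      omega

variable {K' V' : Type*} [Field K'] [AddCommGroup V'] [Module K' V'] [FiniteDimensional K' V']
  {B : Set (Submodule K' V')}

lemma IsCentralArr.finrank_quotient_le_of_orderIso (hA : IsCentralArr A)
    (e : lat A ≃o lat B) (x : lat A) :
    finrank K (V ⧸ x.1) ≤ finrank K' (V' ⧸ (e x).1) := by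
  suffices ∀ k, ∀ x : lat A, k ≤ finrank K (V ⧸ x.1) → k ≤ finrank K' (V' ⧸ (e x).1) from
    this _ x le_rfl
  intro k
  induction k with
  | zero => exact fun _ _ => Nat.zero_le _
  | succ k ih =>
    intro x hk
    obtain ⟨Y, hY, hxY, hYk⟩ := hA.exists_ge_finrank_quotient_eq x.2 (k.le_succ.trans hk)
    have hlt : x < ⟨Y, hY⟩ := lt_of_le_of_ne hxY fun h => by
      rw [← show x.1 = Y from congrArg Subtype.val h] at hYk; omega
    have := Submodule.finrank_quotient_lt_of_lt (e.strictMono hlt)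
    have := ih ⟨Y, hY⟩ hYk.ge
    omega

lemma finrank_quotient_orderIso_apply (hA : IsCentralArr A) (hB : IsCentralArr B)
    (e : lat A ≃o lat B) (x : lat A) :
    finrank K' (V' ⧸ (e x).1) = finrank K (V ⧸ x.1) :=
  le_antisymm (by
    have h := hB.finrank_quotient_le_of_orderIso e.symm (e x)
    rwa [e.symm_apply_apply] at h)
    (hA.finrank_quotient_le_of_orderIso e x)

lemma orderIso_apply_mem_iff (hA : IsCentralArr A) (hB : IsCentralArr B)
    (e : lat A ≃o lat B) (x : lat A) : (e x).1 ∈ B ↔ x.1 ∈ A := by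
  rw [hA.mem_iff_finrank_quotient_eq_one x.2, hB.mem_iff_finrank_quotient_eq_one (e x).2,
    finrank_quotient_orderIso_apply hA hB e x]

end IntersectionLattice

section RankTwoGeneration

variable {K V : Type*} [Field K] [AddCommGroup V] [Module K V]

inductive RankTwoGenerated (A S : Set (Submodule K V)) : Submodule K V → Prop
  | of_mem {H : Submodule K V} : H ∈ S → RankTwoGenerated A S H
  | of_inf_le {H₁ H₂ H : Submodule K V} : RankTwoGenerated A S H₁ → RankTwoGenerated A S H₂ →
      H₁ ≠ H₂ → H ∈ A → H₁ ⊓ H₂ ≤ H → RankTwoGenerated A S H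

variable {A S : Set (Submodule K V)}

lemma RankTwoGenerated.mem (hSA : S ⊆ A) {H : Submodule K V} :
    RankTwoGenerated A S H → H ∈ A
  | .of_mem hH => hSA hH
  | .of_inf_le _ _ _ hH _ => hH

variable [FiniteDimensional K V]
  {K' V' : Type*} [Field K'] [AddCommGroup V'] [Module K' V'] [FiniteDimensional K' V']
  {B : Set (Submodule K' V')}

lemma RankTwoGenerated.map_orderIso (hA : IsCentralArr A) (hB : IsCentralArr B)
    (e : lat A ≃o lat B) {S' : Set (Submodule K' V')} (hSA : S ⊆ A)
    (hSS' : ∀ x : lat A, x.1 ∈ S → (e x).1 ∈ S') {H : Submodule K V} (hH : H ∈ lat A)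
    (hgen : RankTwoGenerated A S H) : RankTwoGenerated B S' (e ⟨H, hH⟩) := by
  induction hgen with
  | of_mem h => exact .of_mem (hSS' _ h)
  | @of_inf_le H₁ H₂ H g₁ g₂ hne hHA hle ih₁ ih₂ =>
    have h₁ := subset_lat A (g₁.mem hSA)
    have h₂ := subset_lat A (g₂.mem hSA)
    refine .of_inf_le (ih₁ h₁) (ih₂ h₂) (fun h => hne ?_)
      ((orderIso_apply_mem_iff hA hB e _).2 hHA) ?_
    · simpa using e.injective (Subtype.ext h)
    · set Z := e.symm ⟨_, inf_mem_lat (e ⟨H₁, h₁⟩).2 (e ⟨H₂, h₂⟩).2⟩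
      have hZ₁ : Z ≤ ⟨H₁, h₁⟩ := e.symm_apply_le.2 (Subtype.coe_le_coe.1 inf_le_left)
      have hZ₂ : Z ≤ ⟨H₂, h₂⟩ := e.symm_apply_le.2 (Subtype.coe_le_coe.1 inf_le_right)
      have hZ : Z ≤ ⟨H, hH⟩ := Subtype.coe_le_coe.1 ((le_inf hZ₁ hZ₂).trans hle)
      exact Subtype.coe_le_coe.2 (e.symm_apply_le.1 hZ)

end RankTwoGeneration

section Formality

variable {K V : Type*} [Field K] [AddCommGroup V] [Module K V]

lemma exists_smul_add_smul_eq_of_ker_inf_le {f g h : V →ₗ[K] K}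
    (hle : LinearMap.ker f ⊓ LinearMap.ker g ≤ LinearMap.ker h) :
    ∃ a b : K, a • f + b • g = h := by
  have hmem := mem_span_of_iInf_ker_le_ker (L := ![f, g]) (K := h) fun x hx => by
    rw [Submodule.mem_iInf] at hx
    exact hle ⟨hx 0, hx 1⟩
  obtain ⟨c, hc⟩ := (Submodule.mem_span_range_iff_exists_fun K).1 hmem
  exact ⟨c 0, c 1, by simpa [Fin.sum_univ_two] using hc⟩

lemma linearIndependent_of_finrank_quotient_iInf_ker {ι : Type*} [Fintype ι]
    {f : ι → V →ₗ[K] K} (h : finrank K (V ⧸ ⨅ i, LinearMap.ker (f i)) = Fintype.card ι) :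
    LinearIndependent K f := by
  classical
  have hsurj : Function.Surjective (LinearMap.pi f) := by
    rw [← LinearMap.range_eq_top]
    apply Submodule.eq_top_of_finrank_eq
    rw [← (LinearMap.quotKerEquivRange _).finrank_eq, LinearMap.ker_pi, h,
      Module.finrank_fintype_fun_eq_card]
  have hf : f = (LinearMap.pi f).dualMap ∘ (Pi.basisFun K ι).dualBasis := by
    ext i x
    simp [LinearMap.dualMap_apply]
  rw [hf]
  exact (Pi.basisFun K ι).dualBasis.linearIndependent.map' _
    (LinearMap.ker_eq_bot.2 (LinearMap.dualMap_injective_of_surjective hsurj))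

def rankTwoRelations (A : Set (Submodule K V)) (α : Submodule K V → V →ₗ[K] K) :
    Set (Submodule K V →₀ K) :=
  {r | ↑r.support ⊆ A ∧ (∑ H ∈ r.support, r H • α H) = 0 ∧
    ∃ X ∈ lat A, finrank K (V ⧸ X) = 2 ∧ ∀ H ∈ r.support, X ≤ H}

variable [FiniteDimensional K V] {A S : Set (Submodule K V)}

lemma exists_rankTwoRelation (hA : ∀ H ∈ A, IsCoatom H) {α : Submodule K V → V →ₗ[K] K}
    (hα : ∀ H ∈ A, LinearMap.ker (α H) = H) {H₁ H₂ H : Submodule K V} (h₁ : H₁ ∈ A)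
    (h₂ : H₂ ∈ A) (hH : H ∈ A) (hne : H₁ ≠ H₂) (hle : H₁ ⊓ H₂ ≤ H) :
    ∃ a b : K, Finsupp.single H₁ a + Finsupp.single H₂ b - Finsupp.single H 1 ∈
      rankTwoRelations A α := by
  obtain ⟨a, b, hab⟩ := exists_smul_add_smul_eq_of_ker_inf_le (f := α H₁) (g := α H₂) (h := α H)
    (by rwa [hα _ h₁, hα _ h₂, hα _ hH])
  have hsupp : ∀ x ∈ (Finsupp.single H₁ a + Finsupp.single H₂ b - Finsupp.single H 1).support,
      x = H₁ ∨ x = H₂ ∨ x = H := by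
    intro x hx
    rw [Finsupp.mem_support_iff] at hx
    contrapose! hx
    simp [hx.1.symm, hx.2.1.symm, hx.2.2.symm]
  refine ⟨a, b, ?_, ?_, H₁ ⊓ H₂, inf_mem_lat (subset_lat A h₁) (subset_lat A h₂),
    Submodule.finrank_quotient_inf_eq_two (hA _ h₁) (hA _ h₂) hne, ?_⟩
  · intro x hx
    rcases hsupp x hx with rfl | rfl | rfl <;> assumption
  · change Finsupp.linearCombination K α _ = 0
    simp [Finsupp.linearCombination_single, hab]
  · intro x hx
    rcases hsupp x hx with rfl | rfl | rfl
    exacts [inf_le_left, inf_le_right, hle]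

theorem isFormal_of_rankTwoGenerated (hA : ∀ H ∈ A, IsCoatom H) (hSA : S ⊆ A)
    (hgen : ∀ H ∈ A, RankTwoGenerated A S H)
    (hind : ∀ α : Submodule K V → V →ₗ[K] K, (∀ H ∈ A, LinearMap.ker (α H) = H) →
      LinearIndepOn K α S) :
    IsFormal A := by
  intro α hα c hcA hc
  change c ∈ Submodule.span K (rankTwoRelations A α)
  set R := Submodule.span K (rankTwoRelations A α)
  have hR : R ≤ LinearMap.ker (Finsupp.linearCombination K α) :=
    Submodule.span_le.2 fun r hr => hr.2.1
  have hsingle : ∀ H, RankTwoGenerated A S H →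
      Finsupp.single H 1 ∈ R ⊔ Finsupp.supported K K S := by
    intro H hH
    induction hH with
    | of_mem hH => exact Submodule.mem_sup_right (Finsupp.single_mem_supported K 1 hH)
    | @of_inf_le H₁ H₂ H g₁ g₂ hne hH hle ih₁ ih₂ =>
      obtain ⟨a, b, hr⟩ := exists_rankTwoRelation hA hα (g₁.mem hSA) (g₂.mem hSA) hH hne hle
      rw [show Finsupp.single H (1 : K) = a • Finsupp.single H₁ 1 + b • Finsupp.single H₂ 1 -
          (Finsupp.single H₁ a + Finsupp.single H₂ b - Finsupp.single H 1) by
        simp [Finsupp.smul_single]]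
      exact sub_mem (add_mem (Submodule.smul_mem _ a ih₁) (Submodule.smul_mem _ b ih₂))
        (Submodule.mem_sup_left (Submodule.subset_span hr))
  have hc' : c ∈ R ⊔ Finsupp.supported K K S := by
    have hcA' : c ∈ Finsupp.supported K K A := hcA
    rw [Finsupp.supported_eq_span_single] at hcA'
    exact Submodule.span_le.2 (by rintro _ ⟨H, hH, rfl⟩; exact hsingle H (hgen H hH)) hcA'
  obtain ⟨t, ht, u, hu, rfl⟩ := Submodule.mem_sup.1 hc'
  have hu0 : u = 0 := by
    refine linearIndepOn_iff.1 (hind α hα) u hu ?_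
    have h : Finsupp.linearCombination K α (t + u) = 0 := hc
    rwa [map_add, LinearMap.mem_ker.1 (hR ht), zero_add] at h
  rwa [hu0, add_zero]

end Formality

lemma SimpleGraph.exists_mem_connected_induce_erase {V : Type*} [DecidableEq V]
    {G : SimpleGraph V} {I : Finset V} (hI : (G.induce (I : Set V)).Connected)
    (hcard : 1 < I.card) : ∃ v ∈ I, (G.induce (I.erase v : Set V)).Connected := by
  have : Nontrivial (I : Set V) := by
    rw [← Fintype.one_lt_card_iff_nontrivial]
    simpa using hcard
  obtain ⟨v, hv⟩ := hI.exists_connected_induce_compl_singleton_of_finite_nontrivial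
  refine ⟨v, v.2, hv.map ⟨fun x => ⟨x.1.1, ?_⟩, fun h => h⟩ ?_⟩
  · exact Finset.mem_erase.2 ⟨fun h => x.2 (Subtype.ext h), x.1.2⟩
  · rintro ⟨y, hy⟩
    obtain ⟨hyv, hyI⟩ := Finset.mem_erase.1 hy
    exact ⟨⟨⟨y, hyI⟩, fun h => hyv (congrArg Subtype.val h)⟩, rfl⟩

section ConnectedSubgraphArrangement

variable (K : Type*) [Field K] {n : ℕ}

lemma sumForm_apply_single (I : Finset (Fin n)) (j : Fin n) :
    sumForm n K I (Pi.single j 1) = if j ∈ I then 1 else 0 := by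
  simp [sumForm, Pi.single_apply]

lemma single_mem_hypI_iff {I : Finset (Fin n)} {j : Fin n} :
    Pi.single j 1 ∈ hypI n K I ↔ j ∉ I := by
  simp [hypI, sumForm_apply_single]

lemma hypI_ne_of_mem_of_notMem {I J : Finset (Fin n)} {j : Fin n} (hjI : j ∈ I) (hjJ : j ∉ J) :
    hypI n K I ≠ hypI n K J :=
  fun h => (single_mem_hypI_iff K).1 (h ▸ (single_mem_hypI_iff K).2 hjJ) hjI

lemma isCoatom_hypI {I : Finset (Fin n)} (hI : I.Nonempty) : IsCoatom (hypI n K I) := by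
  obtain ⟨i, hi⟩ := hI
  exact LinearMap.isCoatom_ker_of_surjective fun x =>
    ⟨x • Pi.single i 1, by simp [sumForm_apply_single, hi]⟩

lemma hypI_erase_inf_le {I : Finset (Fin n)} {v : Fin n} (hv : v ∈ I) :
    hypI n K (I.erase v) ⊓ hypI n K {v} ≤ hypI n K I := by
  rintro x ⟨h₁, h₂⟩
  simp only [SetLike.mem_coe, hypI, LinearMap.mem_ker, sumForm, LinearMap.coe_sum,
    Finset.sum_apply, LinearMap.proj_apply, Finset.sum_singleton] at h₁ h₂ ⊢
  rw [← Finset.sum_erase_add I _ hv, h₁, h₂, add_zero]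

lemma iInf_hypI_singleton : ⨅ i : Fin n, hypI n K {i} = ⊥ := by
  refine eq_bot_iff.2 fun x hx => funext fun i => ?_
  simpa [hypI, sumForm] using (Submodule.mem_iInf _).1 hx i

variable {K}

lemma singleton_mem_connSets (G : SimpleGraph (Fin n)) (v : Fin n) : {v} ∈ connSets G :=
  ⟨Finset.singleton_nonempty v, by simpa using SimpleGraph.Connected.of_subsingleton⟩

lemma connArr_isCentralArr (G : SimpleGraph (Fin n)) : IsCentralArr (connArr K G) :=
  ⟨(Set.toFinite _).image _, by rintro _ ⟨I, hI, rfl⟩; exact isCoatom_hypI K hI.1⟩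

lemma rankTwoGenerated_hypI {G : SimpleGraph (Fin n)} {I : Finset (Fin n)}
    (hI : I ∈ connSets G) :
    RankTwoGenerated (connArr K G) (Set.range fun i => hypI n K {i}) (hypI n K I) := by
  induction hcard : I.card using Nat.strong_induction_on generalizing I with
  | _ k ih =>
    rcases Nat.lt_or_ge 1 I.card with hlt | hle
    · obtain ⟨v, hvI, hconn⟩ := SimpleGraph.exists_mem_connected_induce_erase hI.2 hlt
      have hne : (I.erase v).Nonempty := by
        rw [← Finset.card_pos, Finset.card_erase_of_mem hvI]
        omega
      obtain ⟨w, hw⟩ := hne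
      refine .of_inf_le (ih _ ?_ ⟨⟨w, hw⟩, hconn⟩ rfl) (.of_mem ⟨v, rfl⟩)
        (hypI_ne_of_mem_of_notMem K hw fun h => Finset.ne_of_mem_erase hw
          (Finset.mem_singleton.1 h)) ⟨I, hI, rfl⟩ (hypI_erase_inf_le K hvI)
      rw [Finset.card_erase_of_mem hvI]
      omega
    · obtain ⟨v, rfl⟩ := Finset.card_eq_one.1 (le_antisymm hle (Finset.card_pos.2 hI.1))
      exact .of_mem ⟨v, rfl⟩

end ConnectedSubgraphArrangement

theorem isFormal_of_orderIso_lat_connArr (K : Type*) [Field K] {n : ℕ}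
    (G : SimpleGraph (Fin n)) {K' V' : Type*} [Field K'] [AddCommGroup V'] [Module K' V']
    [FiniteDimensional K' V'] {B : Set (Submodule K' V')} (hB : IsCentralArr B)
    (e : lat B ≃o lat (connArr K G)) :
    IsFormal B := by
  have hA := connArr_isCentralArr (K := K) G
  let s : Fin n → lat (connArr K G) := fun i =>
    ⟨hypI n K {i}, subset_lat _ ⟨{i}, singleton_mem_connSets G i, rfl⟩⟩
  let σ : Fin n → Submodule K' V' := fun i => (e.symm (s i)).1
  have hσ : Function.Injective σ := fun i j h => by_contra fun hij =>
    hypI_ne_of_mem_of_notMem K (Finset.mem_singleton_self i) (by simpa using hij)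
      (congrArg Subtype.val (e.symm.injective (Subtype.ext h)))
  have hσB : Set.range σ ⊆ B := by
    rintro _ ⟨i, rfl⟩
    exact (orderIso_apply_mem_iff hA hB e.symm (s i)).2 ⟨{i}, singleton_mem_connSets G i, rfl⟩
  refine isFormal_of_rankTwoGenerated hB.2 hσB (fun H hH => ?_) (fun α hα => ?_)
  · obtain ⟨I, hI, hIH⟩ := (orderIso_apply_mem_iff hB hA e ⟨H, subset_lat B hH⟩).2 hH
    have hSA : Set.range (fun i => hypI n K {i}) ⊆ connArr K G :=
      Set.range_subset_iff.2 fun i => ⟨{i}, singleton_mem_connSets G i, rfl⟩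
    have hSσ : ∀ x : lat (connArr K G), x.1 ∈ Set.range (fun i => hypI n K {i}) →
        (e.symm x).1 ∈ Set.range σ := by
      rintro x ⟨i, hi⟩
      obtain rfl : x = s i := Subtype.ext hi.symm
      exact ⟨i, rfl⟩
    simpa [hIH] using (rankTwoGenerated_hypI hI).map_orderIso hA hB e.symm hSA hSσ
      (hIH ▸ (e ⟨H, subset_lat B hH⟩).2)
  · rw [linearIndepOn_range_iff hσ]
    refine linearIndependent_of_finrank_quotient_iInf_ker ?_
    have hker : ⨅ i, LinearMap.ker ((α ∘ σ) i) = ⨅ i, σ i :=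
      iInf_congr fun i => hα _ (hσB ⟨i, rfl⟩)
    have hX : ⨅ i, σ i ∈ lat B := ⟨Set.range σ, hσB, sInf_range.symm⟩
    have hbot : (e ⟨_, hX⟩).1 = ⊥ := by
      rw [eq_bot_iff, ← iInf_hypI_singleton K]
      exact le_iInf fun i => show e ⟨_, hX⟩ ≤ s i from e.le_symm_apply.1 (iInf_le σ i)
    rw [hker, Fintype.card_fin, ← finrank_quotient_orderIso_apply hB hA e ⟨_, hX⟩, hbot,
      (Submodule.quotEquivOfEqBot ⊥ rfl).finrank_eq, Module.finrank_fin_fun]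

theorem connArr_combFormal_general (K : Type) [Field K] (n : ℕ) (G : SimpleGraph (Fin n)) :
    IsCombFormal (connArr K G) :=
  ⟨isFormal_of_orderIso_lat_connArr K G (connArr_isCentralArr G) (OrderIso.refl _),
    fun _ _ _ _ hB ⟨e⟩ => isFormal_of_orderIso_lat_connArr K G hB e⟩

/-- For any field `K` and connected simple graph `G`, the
arrangement `A_G(K)` is combinatorially formal. -/
theorem connArr_combFormal (K : Type) [Field K] (n : ℕ) (G : SimpleGraph (Fin n))
    (hG : G.Connected) :
    IsCombFormal (connArr K G) :=
  connArr_combFormal_general K n G
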